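/- In the Weyl algebra in variables x₁, x₂ with partial derivatives ∂₁, ∂₂, for i ≠ j let g_i = ∂_i² + [p(x_i) + q₂(x_i,x_j)]∂_i - q(x_i,x_j)∂_j - r(x_i), where p(x) = (c - ½ - (a+b+1-½)x)/(x(1-x)), q₂(x,y) = 1/(2(x-y)), q(x,y) = y(1-y)/(2x(1-x)(x-y)), r(x) = ab/(x(1-x)), and let G_i = x_i(1-x_i)g_i; then the commutator satisfies [G₁,G₂] = ½ · (2x₁x₂ - x₁ - x₂)/((x₁-x₂)²) · (G₁ - G₂). -/
import Mathlib


set_option maxHeartbeats 8000000 in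
/-- Muirhead operators for `m = 2`, multiplied by `xᵢ(1-xᵢ)`, satisfy
`[G₁,G₂] = ½ (2x₁x₂ - x₁ - x₂)/(x₁-x₂)² (G₁ - G₂)`.
We axiomatize the ring of differential operators with rational function
coefficients: `X1, X2` are the (commuting) multiplication operators,
`D1, D2` the partial derivatives, and `W` is the inverse of `X1 - X2`. -/
theorem stmt_10 (D : Type*) [Ring D] [Algebra ℂ D] (a b c : ℂ)
    (X1 X2 D1 D2 W : D)
    (hXX : X1 * X2 = X2 * X1)
    (hDD : D1 * D2 = D2 * D1)
    (h11 : D1 * X1 = X1 * D1 + 1)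
    (h22 : D2 * X2 = X2 * D2 + 1)
    (h12 : D1 * X2 = X2 * D1)
    (h21 : D2 * X1 = X1 * D2)
    (hW : W * (X1 - X2) = 1 ∧ (X1 - X2) * W = 1)
    (hWX1 : W * X1 = X1 * W) (hWX2 : W * X2 = X2 * W)
    (hD1W : D1 * W = W * D1 - W * W)
    (hD2W : D2 * W = W * D2 + W * W)
    (G1 G2 : D)
    (hG1 : G1 = X1 * (1 - X1) * D1 ^ 2
        + (algebraMap ℂ D (c - 1 / 2) - algebraMap ℂ D (a + b + 1 / 2) * X1) * D1
        + ((1 : ℂ) / 2) • (X1 * (1 - X1) * W) * D1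
        - ((1 : ℂ) / 2) • (X2 * (1 - X2) * W) * D2
        - algebraMap ℂ D (a * b))
    (hG2 : G2 = X2 * (1 - X2) * D2 ^ 2
        + (algebraMap ℂ D (c - 1 / 2) - algebraMap ℂ D (a + b + 1 / 2) * X2) * D2
        + ((1 : ℂ) / 2) • (X2 * (1 - X2) * (-W)) * D2
        - ((1 : ℂ) / 2) • (X1 * (1 - X1) * (-W)) * D1
        - algebraMap ℂ D (a * b)) :
    G1 * G2 - G2 * G1 =
      ((1 : ℂ) / 2) • ((2 * (X1 * X2) - X1 - X2) * (W * W) * (G1 - G2)) := by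
  obtain ⟨hW1, hW2⟩ := hW
  have e0 : W * X1 = W * X2 + 1 := by
    have h := hW1
    rw [mul_sub, sub_eq_iff_eq_add] at h
    exact h.trans (add_comm _ _)
  have e0' : ∀ t : D, W * (X1 * t) = W * (X2 * t) + t := by
    intro t; rw [← mul_assoc, e0]; noncomm_ring
  have e1 : X1 * W = W * X2 + 1 := by rw [← hWX1]; exact e0
  have e1' : ∀ t : D, X1 * (W * t) = W * (X2 * t) + t := by
    intro t; rw [← mul_assoc, e1]; noncomm_ring
  have e2 : X2 * W = W * X2 := hWX2.symm
  have e2' : ∀ t : D, X2 * (W * t) = W * (X2 * t) := by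
    intro t; rw [← mul_assoc, e2, mul_assoc]
  have e3 : X2 * X1 = X1 * X2 := hXX.symm
  have e3' : ∀ t : D, X2 * (X1 * t) = X1 * (X2 * t) := by
    intro t; rw [← mul_assoc, e3, mul_assoc]
  have e4' : ∀ t : D, D1 * (X1 * t) = X1 * (D1 * t) + t := by
    intro t; rw [← mul_assoc, h11]; noncomm_ring
  have e5' : ∀ t : D, D1 * (X2 * t) = X2 * (D1 * t) := by
    intro t; rw [← mul_assoc, h12, mul_assoc]
  have e6' : ∀ t : D, D2 * (X1 * t) = X1 * (D2 * t) := by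
    intro t; rw [← mul_assoc, h21, mul_assoc]
  have e7' : ∀ t : D, D2 * (X2 * t) = X2 * (D2 * t) + t := by
    intro t; rw [← mul_assoc, h22]; noncomm_ring
  have e8 : D2 * D1 = D1 * D2 := hDD.symm
  have e8' : ∀ t : D, D2 * (D1 * t) = D1 * (D2 * t) := by
    intro t; rw [← mul_assoc, e8, mul_assoc]
  have e9' : ∀ t : D, D1 * (W * t) = W * (D1 * t) - W * (W * t) := by
    intro t; rw [← mul_assoc, hD1W]; noncomm_ring
  have e10' : ∀ t : D, D2 * (W * t) = W * (D2 * t) + W * (W * t) := by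
    intro t; rw [← mul_assoc, hD2W]; noncomm_ring
  subst hG1 hG2
  simp only [Algebra.algebraMap_eq_smul_one, pow_two, mul_assoc, mul_add, add_mul,
    mul_sub, sub_mul, mul_neg, neg_mul, mul_one, one_mul, smul_mul_assoc,
    mul_smul_comm, two_mul, e0, e0', e1, e1', e2, e2', e3, e3', h11, e4', h12, e5',
    h21, e6', h22, e7', e8, e8', hD1W, e9', hD2W, e10']
  module
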